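/- The sequent F ⇒ KF is provable in the cut-free calculus IELG⁻ for every formula F, and the sequent KG ⇒ KKG is provable for every formula G. -/
import Mathlib


inductive Fm : Type
  | var : ℕ → Fm
  | bot : Fm
  | and : Fm → Fm → Fm
  | or  : Fm → Fm → Fm
  | imp : Fm → Fm → Fm
  | K   : Fm → Fm
deriving DecidableEq

/-- ¬F abbreviates F → ⊥. -/
def Fm.neg (F : Fm) : Fm := F.imp .bot

/-- A is a propositional variable or ⊥. -/
def Fm.isAtom (A : Fm) : Prop := A = Fm.bot ∨ ∃ n, A = Fm.var n

/-- K applied to each member of a multiset. -/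
def Kset (Γ : Multiset Fm) : Multiset Fm := Γ.map Fm.K
/-- Depth-indexed cut-free sequent calculus IELG⁻ : `IELGm n Γ F` means the
sequent Γ ⇒ F has an IELG⁻-proof of depth at most n. -/
inductive IELGm : ℕ → Multiset Fm → Fm → Prop
  | ax (n : ℕ) (Γ : Multiset Fm) (A : Fm) : A.isAtom → IELGm n (A ::ₘ Γ) A
  | andL (n : ℕ) (Γ : Multiset Fm) (F G H : Fm) :
      IELGm n (F ::ₘ G ::ₘ Γ) H → IELGm (n+1) (F.and G ::ₘ Γ) H
  | andR (n : ℕ) (Γ : Multiset Fm) (F G : Fm) :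
      IELGm n Γ F → IELGm n Γ G → IELGm (n+1) Γ (F.and G)
  | orL (n : ℕ) (Γ : Multiset Fm) (F G H : Fm) :
      IELGm n (F ::ₘ Γ) H → IELGm n (G ::ₘ Γ) H → IELGm (n+1) (F.or G ::ₘ Γ) H
  | orR1 (n : ℕ) (Γ : Multiset Fm) (F G : Fm) : IELGm n Γ F → IELGm (n+1) Γ (F.or G)
  | orR2 (n : ℕ) (Γ : Multiset Fm) (F G : Fm) : IELGm n Γ G → IELGm (n+1) Γ (F.or G)
  | impL (n : ℕ) (Γ : Multiset Fm) (F G H : Fm) :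
      IELGm n (F.imp G ::ₘ Γ) F → IELGm n (G ::ₘ Γ) H →
      IELGm (n+1) (F.imp G ::ₘ Γ) H
  | impR (n : ℕ) (Γ : Multiset Fm) (F G : Fm) :
      IELGm n (F ::ₘ Γ) G → IELGm (n+1) Γ (F.imp G)
  | KI1 (n : ℕ) (Γ Δ : Multiset Fm) (F : Fm) :
      (∀ G, Fm.K G ∉ Γ) →
      IELGm n (Γ + Kset Δ + Δ) F → IELGm (n+1) (Γ + Kset Δ) (Fm.K F)
  | U (n : ℕ) (Γ : Multiset Fm) (F : Fm) :
      IELGm n Γ (Fm.K Fm.bot) → IELGm (n+1) Γ F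

lemma IELGm_succ {n : ℕ} {Γ : Multiset Fm} {F : Fm} (hp : IELGm n Γ F) :
    IELGm (n+1) Γ F := by
  induction hp with
  | ax n Γ A hA => exact IELGm.ax _ Γ A hA
  | andL _ _ _ _ _ _ ih => exact IELGm.andL _ _ _ _ _ ih
  | andR _ _ _ _ _ _ ih1 ih2 => exact IELGm.andR _ _ _ _ ih1 ih2
  | orL _ _ _ _ _ _ _ ih1 ih2 => exact IELGm.orL _ _ _ _ _ ih1 ih2
  | orR1 _ _ _ _ _ ih => exact IELGm.orR1 _ _ _ _ ih
  | orR2 _ _ _ _ _ ih => exact IELGm.orR2 _ _ _ _ ih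
  | impL _ _ _ _ _ _ _ ih1 ih2 => exact IELGm.impL _ _ _ _ _ ih1 ih2
  | impR _ _ _ _ _ ih => exact IELGm.impR _ _ _ _ ih
  | KI1 _ _ _ _ hk _ ih => exact IELGm.KI1 _ _ _ _ hk ih
  | U _ _ _ _ ih => exact IELGm.U _ _ _ ih

lemma IELGm_mono {n m : ℕ} {Γ : Multiset Fm} {F : Fm} (h : n ≤ m)
    (hp : IELGm n Γ F) : IELGm m Γ F := by
  induction h with
  | refl => exact hp
  | step _ ih => exact IELGm_succ ih

lemma Kset_cons (a : Fm) (Δ : Multiset Fm) : Kset (a ::ₘ Δ) = Fm.K a ::ₘ Kset Δ := by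
  simp [Kset]

lemma split_ctx (Γ : Multiset Fm) :
    ∃ Γ₀ Δ, Γ = Γ₀ + Kset Δ ∧ ∀ G, Fm.K G ∉ Γ₀ := by
  induction Γ using Multiset.induction with
  | empty => exact ⟨0, 0, by simp [Kset], by simp⟩
  | cons a Γ ih =>
    obtain ⟨Γ₀, Δ, hΓ, hK⟩ := ih
    cases a with
    | K b =>
      refine ⟨Γ₀, b ::ₘ Δ, ?_, hK⟩
      rw [hΓ, Kset_cons]
      rw [Multiset.add_cons]
    | var n =>
      refine ⟨Fm.var n ::ₘ Γ₀, Δ, by rw [hΓ, Multiset.cons_add], ?_⟩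
      intro G hG
      rcases Multiset.mem_cons.1 hG with h | h
      · exact Fm.noConfusion h
      · exact hK G h
    | bot =>
      refine ⟨Fm.bot ::ₘ Γ₀, Δ, by rw [hΓ, Multiset.cons_add], ?_⟩
      intro G hG
      rcases Multiset.mem_cons.1 hG with h | h
      · exact Fm.noConfusion h
      · exact hK G h
    | and F G' =>
      refine ⟨Fm.and F G' ::ₘ Γ₀, Δ, by rw [hΓ, Multiset.cons_add], ?_⟩
      intro G hG
      rcases Multiset.mem_cons.1 hG with h | h
      · exact Fm.noConfusion h
      · exact hK G h
    | or F G' =>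
      refine ⟨Fm.or F G' ::ₘ Γ₀, Δ, by rw [hΓ, Multiset.cons_add], ?_⟩
      intro G hG
      rcases Multiset.mem_cons.1 hG with h | h
      · exact Fm.noConfusion h
      · exact hK G h
    | imp F G' =>
      refine ⟨Fm.imp F G' ::ₘ Γ₀, Δ, by rw [hΓ, Multiset.cons_add], ?_⟩
      intro G hG
      rcases Multiset.mem_cons.1 hG with h | h
      · exact Fm.noConfusion h
      · exact hK G h

lemma ident : ∀ (A : Fm) (Γ : Multiset Fm), ∃ n, IELGm n (A ::ₘ Γ) A := by
  intro A
  induction A with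
  | var n => exact fun Γ => ⟨0, IELGm.ax 0 Γ _ (Or.inr ⟨n, rfl⟩)⟩
  | bot => exact fun Γ => ⟨0, IELGm.ax 0 Γ _ (Or.inl rfl)⟩
  | and F G ihF ihG =>
    intro Γ
    obtain ⟨n1, h1⟩ := ihF (G ::ₘ Γ)
    obtain ⟨n2, h2⟩ := ihG (F ::ₘ Γ)
    have h2' : IELGm n2 (F ::ₘ G ::ₘ Γ) G := by
      rwa [Multiset.cons_swap]
    refine ⟨n1 + n2 + 2, IELGm.andR _ _ _ _ ?_ ?_⟩
    · exact IELGm.andL _ _ _ _ _ (IELGm_mono (by omega) h1)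
    · exact IELGm.andL _ _ _ _ _ (IELGm_mono (by omega) h2')
  | or F G ihF ihG =>
    intro Γ
    obtain ⟨n1, h1⟩ := ihF Γ
    obtain ⟨n2, h2⟩ := ihG Γ
    refine ⟨n1 + n2 + 2, IELGm.orL _ _ _ _ _ ?_ ?_⟩
    · exact IELGm.orR1 _ _ _ _ (IELGm_mono (by omega) h1)
    · exact IELGm.orR2 _ _ _ _ (IELGm_mono (by omega) h2)
  | imp F G ihF ihG =>
    intro Γ
    obtain ⟨n1, h1⟩ := ihF (Fm.imp F G ::ₘ Γ)
    obtain ⟨n2, h2⟩ := ihG (F ::ₘ Γ)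
    have h1' : IELGm n1 (Fm.imp F G ::ₘ F ::ₘ Γ) F := by
      rwa [Multiset.cons_swap]
    refine ⟨n1 + n2 + 2, IELGm.impR _ _ _ _ ?_⟩
    have h := IELGm.impL (max n1 n2) (F ::ₘ Γ) F G G
      (IELGm_mono (le_max_left n1 n2) h1') (IELGm_mono (le_max_right n1 n2) h2)
    have : Fm.imp F G ::ₘ F ::ₘ Γ = F ::ₘ Fm.imp F G ::ₘ Γ := Multiset.cons_swap _ _ _
    rw [this] at h
    exact IELGm_mono (by omega) h
  | K F ihF =>
    intro Γ
    obtain ⟨Γ₀, Δ, hΓ, hK⟩ := split_ctx Γ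
    obtain ⟨n, h⟩ := ihF (Γ₀ + Kset (F ::ₘ Δ) + Δ)
    have h' : IELGm n (Γ₀ + Kset (F ::ₘ Δ) + (F ::ₘ Δ)) F := by
      have e : Γ₀ + Kset (F ::ₘ Δ) + (F ::ₘ Δ)
          = F ::ₘ (Γ₀ + Kset (F ::ₘ Δ) + Δ) := by
        rw [Multiset.add_cons]
      rwa [e]
    have hmain := IELGm.KI1 n Γ₀ (F ::ₘ Δ) F hK h'
    have e2 : Γ₀ + Kset (F ::ₘ Δ) = Fm.K F ::ₘ Γ := by
      rw [hΓ, Kset_cons, Multiset.add_cons]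
    rw [e2] at hmain
    exact ⟨n + 1, hmain⟩

lemma toKF (F : Fm) : ∃ n, IELGm n {F} (Fm.K F) := by
  cases F with
  | K G =>
    obtain ⟨n, h⟩ := ident (Fm.K G) ({G} : Multiset Fm)
    have h' : IELGm n ((0 : Multiset Fm) + Kset {G} + {G}) (Fm.K G) := by
      have e : (0 : Multiset Fm) + Kset {G} + {G} = Fm.K G ::ₘ {G} := by
        simp [Kset, Multiset.singleton_add]
      rwa [e]
    have hm := IELGm.KI1 n 0 {G} (Fm.K G) (by simp) h'
    have e2 : (0 : Multiset Fm) + Kset {G} = ({Fm.K G} : Multiset Fm) := by simp [Kset]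
    rw [e2] at hm
    exact ⟨n + 1, hm⟩
  | var m =>
    obtain ⟨n, h⟩ := ident (Fm.var m) (0 : Multiset Fm)
    have hm := IELGm.KI1 n {Fm.var m} 0 (Fm.var m) (by simp) (by simpa [Kset] using h)
    exact ⟨n + 1, by simpa [Kset] using hm⟩
  | bot =>
    obtain ⟨n, h⟩ := ident Fm.bot (0 : Multiset Fm)
    have hm := IELGm.KI1 n {Fm.bot} 0 Fm.bot (by simp) (by simpa [Kset] using h)
    exact ⟨n + 1, by simpa [Kset] using hm⟩
  | and F G =>
    obtain ⟨n, h⟩ := ident (Fm.and F G) (0 : Multiset Fm)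
    have hm := IELGm.KI1 n {Fm.and F G} 0 (Fm.and F G) (by simp) (by simpa [Kset] using h)
    exact ⟨n + 1, by simpa [Kset] using hm⟩
  | or F G =>
    obtain ⟨n, h⟩ := ident (Fm.or F G) (0 : Multiset Fm)
    have hm := IELGm.KI1 n {Fm.or F G} 0 (Fm.or F G) (by simp) (by simpa [Kset] using h)
    exact ⟨n + 1, by simpa [Kset] using hm⟩
  | imp F G =>
    obtain ⟨n, h⟩ := ident (Fm.imp F G) (0 : Multiset Fm)
    have hm := IELGm.KI1 n {Fm.imp F G} 0 (Fm.imp F G) (by simp) (by simpa [Kset] using h)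
    exact ⟨n + 1, by simpa [Kset] using hm⟩

/-- F ⇒ KF is provable in IELG⁻ for every F, and KG ⇒ KKG for every G. -/
theorem stmt14 :
    (∀ F : Fm, ∃ n, IELGm n {F} (Fm.K F)) ∧
    (∀ G : Fm, ∃ n, IELGm n {Fm.K G} (Fm.K (Fm.K G))) := by
  exact ⟨toKF, fun G => toKF (Fm.K G)⟩
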